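/- arXiv:1505.00634 — 2 statements merged into one kernel-verified Lean document; each statement's English description precedes it below -/
import Mathlib

section
/- Let P = (x_{s₁},...,x_{s_r}) be a monomial prime in S generated by r variables and m a positive integer. Then the polarization of P^m has the irredundant primary decomposition (P^m)^p = ⋂ (x_{s₁,t₁},...,x_{s_r,t_r}), the intersection over all tuples (t₁,...,t_r) with 1 ≤ t_j ≤ m for all j and t₁ + ⋯ + t_r ≤ m + r − 1. -/
/-!
Both sides are monomial ideals, so the equality can be tested exponent by exponent. For an
exponent `d`, let `c j` be the number of consecutive slots `x_{s j,0}, x_{s j,1}, …` that `d`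
uses, capped at `m`. If `∑ j, c j ≥ m`, then `d` is divisible by the polarization of some `x^a`
with `|a| = m` and `a ≤ c`; otherwise `c` itself indexes a component `(x_{s j, c j})_j` of the
intersection that misses `d`. For irredundancy, the squarefree monomial using every slot below
`m` except `t₀ j` lies in every component except the one indexed by `t₀`.
-/

open MvPolynomial

/-! ### Simplicial complexes, matroids -/

section Complexes

variable {α : Type*}

/-- A simplicial complex: a nonempty collection of finite subsets closed under subsets. -/
def IsSimplicialComplex (Δ : Set (Finset α)) : Prop :=
  Δ.Nonempty ∧ ∀ F ∈ Δ, ∀ G ⊆ F, G ∈ Δ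

/-- The facets (maximal faces) of a complex. -/
def facets (Δ : Set (Finset α)) : Set (Finset α) :=
  {F | F ∈ Δ ∧ ∀ G ∈ Δ, F ⊆ G → F = G}

/-- A complex is pure if all facets have the same cardinality. -/
def IsPure (Δ : Set (Finset α)) : Prop :=
  ∀ F ∈ facets Δ, ∀ G ∈ facets Δ, F.card = G.card

/-- A matroid: a simplicial complex with the augmentation exchange property. -/
def IsMatroidComplex [DecidableEq α] (Δ : Set (Finset α)) : Prop :=
  IsSimplicialComplex Δ ∧
    ∀ F ∈ Δ, ∀ G ∈ Δ, F.card < G.card → ∃ i ∈ G \ F, insert i F ∈ Δ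

/-- The complement complex `Δᶜ`, generated by the complements of the facets of `Δ`. -/
def complementComplex {n : ℕ} (Δ : Set (Finset (Fin n))) : Set (Finset (Fin n)) :=
  {G | ∃ F ∈ facets Δ, G ⊆ Fᶜ}

end Complexes

/-! ### Stanley-Reisner ideals and symbolic powers -/

section SR

variable (k : Type*) [Field k] {n : ℕ}

/-- The monomial prime `P_F = (x_i : i ∈ F)`. -/
noncomputable def varIdeal (F : Finset (Fin n)) : Ideal (MvPolynomial (Fin n) k) :=
  Ideal.span ((fun i => (X i : MvPolynomial (Fin n) k)) '' ↑F)

/-- The Stanley-Reisner ideal of a complex. -/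
noncomputable def SRIdeal (Δ : Set (Finset (Fin n))) : Ideal (MvPolynomial (Fin n) k) :=
  Ideal.span {u | ∃ F : Finset (Fin n), F ∉ Δ ∧ u = ∏ i ∈ F, X i}

/-- The `m`-th symbolic power of the Stanley-Reisner ideal:
`I_Δ^{(m)} = ⋂_{F ∈ F(Δᶜ)} P_F^m`. -/
noncomputable def symbPowSR (Δ : Set (Finset (Fin n))) (m : ℕ) :
    Ideal (MvPolynomial (Fin n) k) :=
  ⨅ F ∈ facets (complementComplex Δ), (varIdeal k F) ^ m

variable {σ : Type*}

/-- A monomial (with coefficient 1). -/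
def IsMonomialElem (p : MvPolynomial σ k) : Prop := ∃ d, p = monomial d 1

/-- A monomial ideal: generated by monomials. -/
def IsMonomialIdeal (I : Ideal (MvPolynomial σ k)) : Prop :=
  ∃ G : Set (MvPolynomial σ k), (∀ g ∈ G, IsMonomialElem k g) ∧ I = Ideal.span G

/-- Complete intersection monomial ideal: generated by a regular sequence of monomials. -/
def IsCIMonomialIdeal (I : Ideal (MvPolynomial σ k)) : Prop :=
  ∃ rs : List (MvPolynomial σ k), (∀ x ∈ rs, IsMonomialElem k x) ∧
    RingTheory.Sequence.IsRegular (MvPolynomial σ k) rs ∧ I = Ideal.span {x | x ∈ rs}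

end SR

/-! ### Prime filtrations, clean and pretty clean -/

section Clean

variable (k : Type*) [Field k] {σ : Type*}

/-- A prime filtration `I = I₀ ⊂ I₁ ⊂ ⋯ ⊂ I_r = S` of monomial ideals with cyclic
quotients `I_i/I_{i-1} ≅ S/p_i` (realized by `I_i = I_{i-1} + (v)` and `I_{i-1} : v = p_i`). -/
structure PrimeFiltration (I : Ideal (MvPolynomial σ k)) where
  len : ℕ
  c : ℕ → Ideal (MvPolynomial σ k)
  p : ℕ → Ideal (MvPolynomial σ k)
  first : c 0 = I
  last : c len = ⊤
  strict : ∀ i < len, c i < c (i + 1)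
  monomial : ∀ i ≤ len, IsMonomialIdeal k (c i)
  prime : ∀ i < len, (p (i + 1)).IsPrime
  cyclic : ∀ i < len, ∃ v, c (i + 1) = c i ⊔ Ideal.span {v} ∧
    Submodule.colon (c i) (Ideal.span {v}) = p (i + 1)

/-- The support of a prime filtration: the set of primes `p₁, …, p_r`. -/
def PrimeFiltration.supp {I : Ideal (MvPolynomial σ k)} (F : PrimeFiltration k I) :
    Set (Ideal (MvPolynomial σ k)) :=
  {q | ∃ i < F.len, q = F.p (i + 1)}

/-- `S/I` is clean: it admits a prime filtration with support `Min(I)`. -/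
def IsCleanIdeal (I : Ideal (MvPolynomial σ k)) : Prop :=
  ∃ F : PrimeFiltration k I, F.supp = I.minimalPrimes

/-- Pretty clean filtration: `p_i ⊆ p_j` with `i < j` forces `p_i = p_j`. -/
def PrimeFiltration.IsPrettyClean {I : Ideal (MvPolynomial σ k)}
    (F : PrimeFiltration k I) : Prop :=
  ∀ i j, 0 < i → i < j → j ≤ F.len → F.p i ≤ F.p j → F.p i = F.p j

/-- `S/I` is pretty clean: it admits a pretty clean prime filtration. -/
def IsPrettyCleanIdeal (I : Ideal (MvPolynomial σ k)) : Prop :=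
  ∃ F : PrimeFiltration k I, F.IsPrettyClean

end Clean

/-! ### Dimension, depth, Cohen-Macaulayness -/

section CM

/-- Krull dimension of a module, as `dim S/ann M`. -/
noncomputable def modDim (S : Type*) [CommRing S] (M : Type*) [AddCommGroup M]
    [Module S M] : WithBot (WithTop ℕ) :=
  ringKrullDim (S ⧸ Module.annihilator S M)

variable (k : Type*) [Field k] (n : ℕ)

/-- The graded maximal ideal `(x₁, …, xₙ)`. -/
noncomputable def maxIdeal : Ideal (MvPolynomial (Fin n) k) := Ideal.span (Set.range X)

/-- A module over `k[x₁,…,xₙ]` is Cohen-Macaulay if it is trivial or admits a weakly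
regular sequence in the graded maximal ideal whose length equals its Krull dimension
(i.e. depth = dim). -/
def IsCMmod (M : Type*) [AddCommGroup M] [Module (MvPolynomial (Fin n) k) M] : Prop :=
  Subsingleton M ∨ ∃ rs : List (MvPolynomial (Fin n) k),
    (∀ x ∈ rs, x ∈ maxIdeal k n) ∧ RingTheory.Sequence.IsWeaklyRegular M rs ∧
      modDim (MvPolynomial (Fin n) k) M = (rs.length : WithBot (WithTop ℕ))

/-- `S/I` is Cohen-Macaulay. -/
def IsCMIdeal (I : Ideal (MvPolynomial (Fin n) k)) : Prop :=
  IsCMmod k n (MvPolynomial (Fin n) k ⧸ I)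

/-- The subquotient `A/B` of two ideals, as a module. -/
def subQuot {S : Type*} [CommRing S] (A B : Ideal S) :=
  A ⧸ (Submodule.comap A.subtype B)

noncomputable instance {S : Type*} [CommRing S] (A B : Ideal S) : AddCommGroup (subQuot A B) := by
  unfold subQuot; infer_instance

noncomputable instance {S : Type*} [CommRing S] (A B : Ideal S) : Module S (subQuot A B) := by
  unfold subQuot; infer_instance

/-- Sequentially Cohen-Macaulay: there is a chain of monomial ideals
`I = I₀ ⊂ ⋯ ⊂ I_r = S` with Cohen-Macaulay quotients of strictly increasing dimension. -/
def IsSeqCMIdeal (I : Ideal (MvPolynomial (Fin n) k)) : Prop :=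
  ∃ (r : ℕ) (c : ℕ → Ideal (MvPolynomial (Fin n) k)),
    c 0 = I ∧ c r = ⊤ ∧ (∀ i ≤ r, IsMonomialIdeal k (c i)) ∧
    (∀ i < r, c i < c (i + 1)) ∧
    (∀ i < r, IsCMmod k n (subQuot (c (i + 1)) (c i))) ∧
    ∀ i, i + 1 < r →
      modDim (MvPolynomial (Fin n) k) (subQuot (c (i + 1)) (c i)) <
        modDim (MvPolynomial (Fin n) k) (subQuot (c (i + 2)) (c (i + 1)))

end CM

/-! ### Graphs of 1-dimensional complexes -/

section Graphs

/-- The graph whose edges are the 2-element faces of `Δ`. -/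
def complexGraph {n : ℕ} (Δ : Set (Finset (Fin n))) : SimpleGraph (Fin n) where
  Adj u v := u ≠ v ∧ ({u, v} : Finset (Fin n)) ∈ Δ
  symm := by
    refine ⟨fun u v h => ?_⟩
    exact ⟨h.1.symm, by rw [Finset.pair_comm]; exact h.2⟩
  loopless := ⟨fun u h => h.1 rfl⟩

end Graphs

/-! ### Linear quotients -/

section LQ

variable (k : Type*) [Field k] {σ : Type*}

/-- A monomial ideal has linear quotients: its minimal generators can be ordered
`u₁, …, u_s` so that each colon `(u₁,…,u_{i-1}) : u_i` is generated by variables. -/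
def HasLinearQuotients (J : Ideal (MvPolynomial σ k)) : Prop :=
  ∃ L : List (MvPolynomial σ k), (∀ u ∈ L, IsMonomialElem k u) ∧
    J = Ideal.span {u | u ∈ L} ∧
    ∀ i (h : i < L.length), 0 < i → ∃ V : Set σ,
      Submodule.colon (Ideal.span {u | u ∈ L.take i}) (Ideal.span {L.get ⟨i, h⟩}) =
        Ideal.span ((fun s => (X s : MvPolynomial σ k)) '' V)

end LQ

/-! ### Symbolic powers via saturation at minimal primes -/

section Symb

variable {S : Type*} [CommRing S]

/-- The contraction of `J S_P` back to `S`: `{x | ∃ s ∉ P, s·x ∈ J}`. -/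
def satAtPrime (J P : Ideal S) (hP : P.IsPrime) : Ideal S where
  carrier := {x | ∃ s, s ∉ P ∧ s * x ∈ J}
  zero_mem' := ⟨1, fun h => hP.ne_top ((Ideal.eq_top_iff_one P).2 h), by simp⟩
  add_mem' := by
    rintro a b ⟨s, hs, hsa⟩ ⟨t, ht, htb⟩
    refine ⟨s * t, fun h => ((hP.mem_or_mem h).elim hs ht), ?_⟩
    have : s * t * (a + b) = t * (s * a) + s * (t * b) := by ring
    rw [this]
    exact Ideal.add_mem _ (Ideal.mul_mem_left _ _ hsa) (Ideal.mul_mem_left _ _ htb)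
  smul_mem' := by
    rintro r a ⟨s, hs, hsa⟩
    refine ⟨s, hs, ?_⟩
    have : s * (r • a) = r * (s * a) := by simp [smul_eq_mul]; ring
    rw [this]
    exact Ideal.mul_mem_left _ _ hsa

/-- The `m`-th symbolic power: the intersection over the minimal primes `P` of `I` of the
`P`-primary components of `I^m` (contractions of `I^m S_P`). -/
noncomputable def symbolicPower (I : Ideal S) (m : ℕ) : Ideal S :=
  sInf {J | ∃ P, ∃ h : P ∈ I.minimalPrimes, J = satAtPrime (I ^ m) P h.1.1}

end Symb

open Finset

theorem exists_le_sum_eq_of_le_sum {ι : Type*} [Fintype ι] (c : ι → ℕ) {m : ℕ}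
    (h : m ≤ ∑ i, c i) : ∃ a ≤ c, ∑ i, a i = m := by
  obtain ⟨g, hgc, hg⟩ := Finsupp.exists_le_degree_eq (Finsupp.equivFunOnFinite.symm c) m
    (by rwa [Finsupp.degree_eq_sum])
  exact ⟨g, fun i => hgc i, by rwa [Finsupp.degree_eq_sum] at hg⟩

theorem exists_sum_eq_forall_lt_iff {ι : Type*} [Fintype ι] (P : ι → ℕ → Prop) {m : ℕ}
    (hm : 0 < m) :
    (∃ a : ι → ℕ, ∑ i, a i = m ∧ ∀ i, ∀ t < a i, P i t) ↔
      ∀ t : ι → ℕ, (∀ i, t i < m) → ∑ i, t i ≤ m - 1 → ∃ i, P i (t i) := by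
  classical
  constructor
  · rintro ⟨a, rfl, ha⟩ t - ht
    obtain ⟨i, -, hi⟩ := exists_lt_of_sum_lt (by omega : ∑ i, t i < ∑ i, a i)
    exact ⟨i, ha i _ hi⟩
  · intro h
    -- `c i` is the length of the initial run of `P i`, capped at `m`
    have hc : ∀ i, ∃ t, m ≤ t ∨ ¬ P i t := fun _ => ⟨m, .inl le_rfl⟩
    set c : ι → ℕ := fun i => Nat.find (hc i)
    have hPc : ∀ i, ∀ t < c i, P i t := fun i t ht => by
      simpa using (not_or.1 (Nat.find_min (hc i) ht)).2
    by_cases hsum : m ≤ ∑ i, c i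
    · obtain ⟨a, hac, ha⟩ := exists_le_sum_eq_of_le_sum c hsum
      exact ⟨a, ha, fun i t ht => hPc i t (ht.trans_le (hac i))⟩
    · have hcm : ∀ i, c i < m := fun i =>
        (single_le_sum (fun j _ => Nat.zero_le (c j)) (mem_univ i)).trans_lt (not_le.1 hsum)
      obtain ⟨i, hi⟩ := h c hcm (by omega)
      exact absurd hi ((Nat.find_spec (hc i)).resolve_left (not_le.2 (hcm i)))

section SquarefreeMonomial

variable {R σ : Type*} [CommSemiring R]

theorem prod_X_eq_monomial_sum_single (S : Finset σ) :
    ∏ p ∈ S, (X p : MvPolynomial σ R) = monomial (∑ p ∈ S, Finsupp.single p 1) 1 := by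
  rw [monomial_sum_one]; rfl

theorem sum_single_one_apply_ne_zero_iff (S : Finset σ) (q : σ) :
    (∑ p ∈ S, Finsupp.single p 1) q ≠ 0 ↔ q ∈ S := by
  classical
  simp [Finsupp.finsetSum_apply, Finsupp.single_apply]

theorem sum_single_one_le_iff (S : Finset σ) (d : σ →₀ ℕ) :
    ∑ p ∈ S, Finsupp.single p 1 ≤ d ↔ ∀ p ∈ S, d p ≠ 0 := by
  classical
  simp only [Finsupp.le_def, Finsupp.finsetSum_apply, Finsupp.single_apply, sum_ite_eq']
  refine forall_congr' fun p => ?_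
  split_ifs with hp <;> simp [hp, Nat.one_le_iff_ne_zero]

theorem mem_span_range_X_iff {ι : Type*} (v : ι → σ) (f : MvPolynomial σ R) :
    f ∈ Ideal.span (Set.range fun i => X (v i)) ↔ ∀ d ∈ f.support, ∃ i, d (v i) ≠ 0 := by
  rw [Set.range_comp' X v, mem_ideal_span_X_image]
  simp

theorem prod_X_mem_span_range_X_iff [Nontrivial R] {ι : Type*} (S : Finset σ) (v : ι → σ) :
    ∏ p ∈ S, (X p : MvPolynomial σ R) ∈ Ideal.span (Set.range fun i => X (v i)) ↔
      ∃ i, v i ∈ S := by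
  classical
  rw [mem_span_range_X_iff, prod_X_eq_monomial_sum_single, support_monomial, if_neg one_ne_zero]
  simp only [mem_singleton, forall_eq, sum_single_one_apply_ne_zero_iff]

end SquarefreeMonomial

section Polarization

variable {ι κ R : Type*} [CommSemiring R] {s : ι → κ}

def polarizationEmbedding (hs : Function.Injective s) : (Σ _ : ι, ℕ) ↪ κ × ℕ :=
  ⟨fun x => (s x.1, x.2), by
    rintro ⟨i, t⟩ ⟨j, u⟩ h
    obtain ⟨hij, rfl⟩ := Prod.ext_iff.1 h
    cases hs hij
    rfl⟩

@[simp]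
theorem polarizationEmbedding_apply (hs : Function.Injective s) (x : Σ _ : ι, ℕ) :
    polarizationEmbedding hs x = (s x.1, x.2) :=
  rfl

theorem mk_mem_map_polarizationEmbedding [Fintype ι] (hs : Function.Injective s)
    (A : ι → Finset ℕ) (j : ι) (t : ℕ) :
    (s j, t) ∈ (univ.sigma A).map (polarizationEmbedding hs) ↔ t ∈ A j :=
  (mem_map' (polarizationEmbedding hs) (a := ⟨j, t⟩)).trans (by simp)

variable [Fintype ι]

theorem prod_prod_X_eq_prod_map_polarizationEmbedding (hs : Function.Injective s)
    (A : ι → Finset ℕ) :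
    ∏ j, ∏ t ∈ A j, (X (s j, t) : MvPolynomial (κ × ℕ) R) =
      ∏ p ∈ (univ.sigma A).map (polarizationEmbedding hs), X p := by
  rw [prod_map, prod_sigma]
  rfl

variable (R s)

noncomputable def polarizedPrimePow (m : ℕ) : Ideal (MvPolynomial (κ × ℕ) R) :=
  Ideal.span {u | ∃ a : ι → ℕ, ∑ j, a j = m ∧ u = ∏ j, ∏ t ∈ range (a j), X (s j, t)}

noncomputable def polarComponent (t : ι → ℕ) : Ideal (MvPolynomial (κ × ℕ) R) :=
  Ideal.span (Set.range fun j => X (s j, t j))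

variable {R s}

theorem mem_polarizedPrimePow_iff (hs : Function.Injective s) {m : ℕ}
    (f : MvPolynomial (κ × ℕ) R) :
    f ∈ polarizedPrimePow R s m ↔
      ∀ d ∈ f.support, ∃ a : ι → ℕ, ∑ j, a j = m ∧ ∀ j, ∀ t < a j, d (s j, t) ≠ 0 := by
  have hgen : {u | ∃ a : ι → ℕ, ∑ j, a j = m ∧ u = ∏ j, ∏ t ∈ range (a j), X (s j, t)} =
      (fun d => monomial d (1 : R)) '' ((fun a => ∑ p ∈ (univ.sigma fun j => range (a j)).map
        (polarizationEmbedding hs), Finsupp.single p 1) '' {a : ι → ℕ | ∑ j, a j = m}) := by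
    ext u
    simp only [Set.mem_ofPred_eq, Set.mem_image, exists_exists_and_eq_and,
      prod_prod_X_eq_prod_map_polarizationEmbedding hs, prod_X_eq_monomial_sum_single,
      eq_comm (a := u)]
  rw [polarizedPrimePow, hgen, mem_ideal_span_monomial_image]
  refine forall₂_congr fun d _ => ?_
  simp only [Set.mem_image, Set.mem_ofPred_eq, exists_exists_and_eq_and, sum_single_one_le_iff,
    forall_mem_map, mem_sigma, mem_univ, true_and, mem_range, Sigma.forall,
    polarizationEmbedding_apply]

theorem polarizedPrimePow_eq_iInf (hs : Function.Injective s) {m : ℕ} (hm : 0 < m) :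
    polarizedPrimePow R s m =
      ⨅ t ∈ {t : ι → ℕ | (∀ j, t j < m) ∧ ∑ j, t j ≤ m - 1}, polarComponent R s t := by
  ext f
  simp only [mem_polarizedPrimePow_iff hs, Submodule.mem_iInf, polarComponent,
    mem_span_range_X_iff, exists_sum_eq_forall_lt_iff _ hm]
  exact ⟨fun h t ht d hd => h d hd t ht.1 ht.2, fun h d hd t ht hsum => h t ⟨ht, hsum⟩ d hd⟩

theorem iInf_polarComponent_diff_ne [Nontrivial R] (hs : Function.Injective s)
    {T : Set (ι → ℕ)} {m : ℕ} (hT : ∀ t ∈ T, ∀ j, t j < m) {t₀ : ι → ℕ} (ht₀ : t₀ ∈ T) :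
    ⨅ t ∈ T \ {t₀}, polarComponent R s t ≠ ⨅ t ∈ T, polarComponent R s t := by
  set w := ∏ p ∈ (univ.sigma fun j => (range m).erase (t₀ j)).map (polarizationEmbedding hs),
    (X p : MvPolynomial (κ × ℕ) R)
  have hw : ∀ t, w ∈ polarComponent R s t ↔ ∃ j, t j < m ∧ t j ≠ t₀ j := by
    intro t
    rw [polarComponent, prod_X_mem_span_range_X_iff]
    simp only [mk_mem_map_polarizationEmbedding, mem_erase, mem_range, and_comm]
  intro h
  have hmem : w ∈ ⨅ t ∈ T \ {t₀}, polarComponent R s t := by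
    simp only [Submodule.mem_iInf]
    rintro t ⟨ht, hne⟩
    obtain ⟨j, hj⟩ := Function.ne_iff.1 hne
    exact (hw t).2 ⟨j, hT t ht j, hj⟩
  rw [h] at hmem
  obtain ⟨j, -, hj⟩ := (hw t₀).1 (biInf_le (polarComponent R s) ht₀ hmem)
  exact hj rfl

end Polarization

/-- Polarized variables are indexed by `Fin n × ℕ` with 0-based slots: the paper's slot
`t_j ∈ [1, m]` is `t j < m` here, and `∑ t_j ≤ m + r − 1` becomes `∑ t j ≤ m − 1`. -/
theorem statement11 (k : Type*) [Field k] {n r : ℕ} (s : Fin r → Fin n)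
    (hs : Function.Injective s) (m : ℕ) (hm : 0 < m) :
    let T : Set (Fin r → ℕ) := {t | (∀ j, t j < m) ∧ (∑ j, t j) ≤ m - 1}
    let C : (Fin r → ℕ) → Ideal (MvPolynomial (Fin n × ℕ) k) :=
      fun t => Ideal.span (Set.range fun j => (X (s j, t j) : MvPolynomial (Fin n × ℕ) k))
    (Ideal.span {u : MvPolynomial (Fin n × ℕ) k | ∃ a : Fin r → ℕ, (∑ j, a j) = m ∧
        u = ∏ j, ∏ t ∈ Finset.range (a j), X (s j, t)} = ⨅ t ∈ T, C t) ∧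
    ∀ t0 ∈ T, (⨅ t ∈ T \ {t0}, C t) ≠ ⨅ t ∈ T, C t :=
  ⟨polarizedPrimePow_eq_iInf hs hm, fun _ ht₀ =>
    iInf_polarComponent_diff_ne hs (fun _ ht => ht.1) ht₀⟩
end

section
/- Let Δ be a matroid on [n] with all facets of Δ^c of size r, and m a positive integer. Then the ideal J generated by all monomials x_{i₁,a₁}⋯x_{i_r,a_r} with {i₁,...,i_r} a facet of Δ^c, 1 ≤ a_j ≤ m, and a₁ + ⋯ + a_r ≤ m + r − 1, in the polynomial ring k[x_{i,a} : 1 ≤ i ≤ n, 1 ≤ a ≤ m], has linear quotients. -/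
open MvPolynomial

/-! Order the generators colexicographically, for the order on variables in which `x_{i,a}`
precedes `x_{j,b}` when `(a, i) < (b, j)` lexicographically. If a generator `u'` precedes `u`,
the largest variable `x_{q,c}` dividing exactly one of them divides `u`. Replacing it in `u` by a
smaller variable `x_{p,b}` of `u'` (so `b ≤ c`, and the degree bound survives) gives an earlier
generator dividing `x_{p,b} u`: if `q` occurs in `u'` take `p = q`; otherwise `p` comes from the
basis exchange in the dual matroid, whose bases are the facets of `Δᶜ`. Hence every colon ideal
is generated by variables. -/

section MatroidComplex

variable {α : Type*} {Δ : Set (Finset α)}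

theorem IsSimplicialComplex.empty_mem (h : IsSimplicialComplex Δ) : ∅ ∈ Δ :=
  let ⟨F, hF⟩ := h.1
  h.2 F hF ∅ (Finset.empty_subset F)

variable [DecidableEq α]

def IsMatroidComplex.toMatroid (h : IsMatroidComplex Δ) : Matroid α :=
  (IndepMatroid.ofFinset Set.univ (· ∈ Δ) h.1.empty_mem
    (fun _ J hJ hIJ => h.1.2 J hJ _ hIJ)
    (fun I J hI hJ hlt => by
      obtain ⟨e, he, hins⟩ := h.2 I hI J hJ hlt
      exact ⟨e, (Finset.mem_sdiff.1 he).1, (Finset.mem_sdiff.1 he).2, hins⟩)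
    (fun _ _ => Set.subset_univ _)).matroid

theorem IsMatroidComplex.toMatroid_indep_coe_iff (h : IsMatroidComplex Δ) {I : Finset α} :
    h.toMatroid.Indep I ↔ I ∈ Δ := by
  simp [IsMatroidComplex.toMatroid]

theorem IsMatroidComplex.toMatroid_isBase_coe_iff [Finite α] (h : IsMatroidComplex Δ)
    {A : Finset α} : h.toMatroid.IsBase A ↔ A ∈ facets Δ := by
  simp only [Matroid.isBase_iff_maximal_indep, Maximal, h.toMatroid_indep_coe_iff, facets,
    Set.mem_ofPred_eq]
  refine and_congr_right fun _ => ⟨fun hmax G hG hAG => ?_, fun hmax J hJ hAJ => ?_⟩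
  · have hGA := hmax (h.toMatroid_indep_coe_iff.2 hG) (by exact_mod_cast hAG)
    exact hAG.antisymm (by exact_mod_cast hGA)
  · obtain ⟨J, rfl⟩ := J.toFinite.exists_finset_coe
    rw [hmax J (h.toMatroid_indep_coe_iff.1 hJ) (by exact_mod_cast hAJ)]

end MatroidComplex

section ComplementComplex

variable {n : ℕ} {Δ : Set (Finset (Fin n))}

theorem mem_facets_complementComplex_iff {B : Finset (Fin n)} :
    B ∈ facets (complementComplex Δ) ↔ Bᶜ ∈ facets Δ := by
  constructor
  · rintro ⟨⟨A, hA, hBA⟩, hmax⟩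
    rwa [hmax Aᶜ ⟨A, hA, subset_rfl⟩ hBA, compl_compl]
  · intro hB
    refine ⟨⟨Bᶜ, hB, (compl_compl B).symm.subset⟩, fun G ⟨A, hA, hGA⟩ hBG => ?_⟩
    have hAB : A = Bᶜ := hA.2 _ hB.1 (Finset.subset_compl_comm.1 (hBG.trans hGA))
    rw [hAB, compl_compl] at hGA
    exact hBG.antisymm hGA

theorem IsMatroidComplex.dual_isBase_coe_iff (hM : IsMatroidComplex Δ) {B : Finset (Fin n)} :
    hM.toMatroid✶.IsBase B ↔ B ∈ facets (complementComplex Δ) := by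
  rw [Matroid.dual_isBase_iff (Set.subset_univ _), mem_facets_complementComplex_iff,
    ← hM.toMatroid_isBase_coe_iff, Finset.coe_compl, Set.compl_eq_univ_sdiff]
  rfl

theorem IsMatroidComplex.exists_insert_erase_mem_facets_complementComplex
    (hM : IsMatroidComplex Δ) {B B' : Finset (Fin n)} (hB : B ∈ facets (complementComplex Δ))
    (hB' : B' ∈ facets (complementComplex Δ)) {q : Fin n} (hq : q ∈ B \ B') :
    ∃ p ∈ B' \ B, insert p (B.erase q) ∈ facets (complementComplex Δ) := by
  rw [← hM.dual_isBase_coe_iff] at hB hB'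
  obtain ⟨p, hp, hbase⟩ := hB.exchange hB' (by exact_mod_cast hq)
  refine ⟨p, by exact_mod_cast hp, ?_⟩
  rwa [← hM.dual_isBase_coe_iff, Finset.coe_insert, Finset.coe_erase]

end ComplementComplex

theorem List.SortedLT.mem_take_iff {β : Type*} [LinearOrder β] {L : List β} (hL : L.SortedLT)
    {i : ℕ} (hi : i < L.length) {b : β} : b ∈ L.take i ↔ b ∈ L ∧ b < L[i] := by
  simp only [List.mem_iff_getElem, List.length_take, List.getElem_take]
  constructor
  · rintro ⟨j, hj, rfl⟩
    exact ⟨⟨j, by omega, rfl⟩, hL.getElem_lt_getElem_iff.2 (by omega)⟩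
  · rintro ⟨⟨j, hj, rfl⟩, hlt⟩
    exact ⟨j, by have := hL.getElem_lt_getElem_iff.1 hlt; omega, rfl⟩

section MonomialIdeals

variable {k σ : Type*}

theorem colon_span_monomial_image_eq_span_X_image [CommRing k] (D : Set (σ →₀ ℕ)) (d : σ →₀ ℕ)
    (hD : ∀ d' ∈ D, ∃ s, d s < d' s ∧ ∃ d'' ∈ D, d'' ≤ d + Finsupp.single s 1) :
    (Ideal.span ((fun e => monomial e (1 : k)) '' D)).colon
      (Ideal.span {(monomial d 1 : MvPolynomial σ k)}) =
      Ideal.span (X '' {s | ∃ d'' ∈ D, d'' ≤ d + Finsupp.single s 1}) := by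
  apply le_antisymm
  · intro f hf
    replace hf := Ideal.mem_colon_span_singleton.1 hf
    refine mem_ideal_span_X_image.2 fun e he => ?_
    have hed : e + d ∈ (f * monomial d 1).support := by
      rwa [mem_support_iff, coeff_mul_monomial, mul_one, ← mem_support_iff]
    obtain ⟨d', hd'D, hd'⟩ := mem_ideal_span_monomial_image.1 hf _ hed
    obtain ⟨s, hs, hsV⟩ := hD d' hd'D
    have hle : d' s ≤ e s + d s := hd' s
    exact ⟨s, hsV, by omega⟩
  · rw [Ideal.span_le]
    rintro _ ⟨s, ⟨d'', hd''D, hd''⟩, rfl⟩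
    refine Ideal.mem_colon_span_singleton.2 (mem_ideal_span_monomial_image.2 fun e he => ?_)
    rw [X, monomial_mul, one_mul] at he
    rw [Finset.mem_singleton.1 (support_monomial_subset he)]
    exact ⟨d'', hd''D, add_comm d _ ▸ hd''⟩

theorem hasLinearQuotients_of_exchange [Field k] {β γ : Type*} [LinearOrder γ] (G : Finset β)
    (d : β → σ →₀ ℕ) (ρ : β → γ) (hρ : Function.Injective ρ)
    (hex : ∀ b ∈ G, ∀ b' ∈ G, ρ b' < ρ b →
      ∃ s, d b s < d b' s ∧ ∃ b'' ∈ G, ρ b'' < ρ b ∧ d b'' ≤ d b + Finsupp.single s 1) :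
    HasLinearQuotients k (Ideal.span ((fun b => monomial (d b) (1 : k)) '' G)) := by
  let _ : LinearOrder β := LinearOrder.lift' ρ hρ
  have hL := G.sortedLT_sort
  refine ⟨(G.sort).map fun b => monomial (d b) 1, by simp [IsMonomialElem],
    by congr 1; ext; simp, ?_⟩
  intro i hi _
  rw [List.length_map] at hi
  have hearlier : {u | u ∈ ((G.sort).map fun b => monomial (d b) (1 : k)).take i} =
      (fun e => monomial e 1) '' (d '' {b ∈ G | b < (G.sort)[i]}) := by
    ext u
    simp [← List.map_take, hL.mem_take_iff hi]
  rw [hearlier, List.get_eq_getElem, List.getElem_map]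
  refine ⟨_, colon_span_monomial_image_eq_span_X_image _ _ ?_⟩
  rintro _ ⟨b', ⟨hb'G, hb'⟩, rfl⟩
  obtain ⟨s, hs, b'', hb''G, hb'', hle⟩ :=
    hex _ ((G.mem_sort _).1 (List.getElem_mem hi)) b' hb'G hb'
  exact ⟨s, hs, d b'', ⟨b'', ⟨hb''G, hb''⟩, rfl⟩, hle⟩

end MonomialIdeals

section SquarefreeMonomials

variable {σ : Type*}

noncomputable def squarefreeExponent (S : Finset σ) : σ →₀ ℕ := ∑ s ∈ S, Finsupp.single s 1

theorem squarefreeExponent_apply [DecidableEq σ] (S : Finset σ) (s : σ) :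
    squarefreeExponent S s = if s ∈ S then 1 else 0 := by
  simp [squarefreeExponent, Finsupp.finsetSum_apply, Finsupp.single_apply]

theorem squarefreeExponent_mono {S T : Finset σ} (h : S ⊆ T) :
    squarefreeExponent S ≤ squarefreeExponent T :=
  Finset.sum_le_sum_of_subset h

theorem squarefreeExponent_insert [DecidableEq σ] {S : Finset σ} {s : σ} (hs : s ∉ S) :
    squarefreeExponent (insert s S) = squarefreeExponent S + Finsupp.single s 1 := by
  rw [squarefreeExponent, Finset.sum_insert hs, add_comm]
  rfl

theorem monomial_squarefreeExponent_image {k ι : Type*} [CommSemiring k] [DecidableEq σ]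
    {s : Finset ι} {g : ι → σ} (hg : Function.Injective g) :
    monomial (squarefreeExponent (s.image g)) (1 : k) = ∏ j ∈ s, X (g j) := by
  rw [squarefreeExponent, Finset.sum_image fun _ _ _ _ h => hg h, monomial_sum_one]
  rfl

end SquarefreeMonomials

section ColexRank

variable {n : ℕ}

def levelKey (s : Fin n × ℕ) : ℕ ×ₗ Fin n := toLex (s.2, s.1)

theorem levelKey_injective : Function.Injective (levelKey (n := n)) := by
  intro s t h
  simp only [levelKey, toLex_inj, Prod.mk.injEq] at h
  exact Prod.ext h.2 h.1

theorem snd_le_of_levelKey_lt {s t : Fin n × ℕ} (h : levelKey s < levelKey t) : s.2 ≤ t.2 :=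
  Prod.Lex.monotone_fst _ _ h.le

def colexRank (S : Finset (Fin n × ℕ)) : Colex (Finset (ℕ ×ₗ Fin n)) :=
  toColex (S.map ⟨levelKey, levelKey_injective⟩)

theorem colexRank_injective : Function.Injective (colexRank (n := n)) :=
  fun _ _ h => Finset.map_injective _ (toColex_inj.1 h)

theorem colexRank_lt_colexRank_iff {S T : Finset (Fin n × ℕ)} :
    colexRank S < colexRank T ↔ ∃ a ∈ T, a ∉ S ∧ ∀ b ∈ S, b ∉ T → levelKey b < levelKey a := by
  rw [colexRank, colexRank, Finset.Colex.toColex_lt_toColex_iff_exists_forall_lt]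
  simp only [Finset.mem_map, Function.Embedding.coeFn_mk, exists_exists_and_eq_and,
    levelKey_injective.eq_iff, exists_eq_right, forall_exists_index, and_imp,
    forall_apply_eq_imp_iff₂]

theorem colexRank_insert_erase_lt {S : Finset (Fin n × ℕ)} {v t : Fin n × ℕ} (hv : v ∈ S)
    (htv : levelKey t < levelKey v) : colexRank (insert t (S.erase v)) < colexRank S := by
  refine colexRank_lt_colexRank_iff.2 ⟨v, hv, ?_, fun b hb hbS => ?_⟩
  · simpa using fun h : v = t => htv.ne' (congrArg levelKey h)
  · obtain rfl : b = t := by simpa [hbS] using hb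
    exact htv

end ColexRank

section GeneratorSets

variable {n : ℕ} {Δ : Set (Finset (Fin n))} {r m : ℕ}

/-- The variable sets `{(i₁,a₁), …, (i_r,a_r)}` of the generators of `J`. -/
def generatorSets (Δ : Set (Finset (Fin n))) (r m : ℕ) : Set (Finset (Fin n × ℕ)) :=
  {S | Set.InjOn Prod.fst (S : Set (Fin n × ℕ)) ∧
    S.image Prod.fst ∈ facets (complementComplex Δ) ∧
    (∀ s ∈ S, 1 ≤ s.2 ∧ s.2 ≤ m) ∧ ∑ s ∈ S, s.2 ≤ m + r - 1}

theorem generatorSets_finite : (generatorSets Δ r m).Finite := by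
  refine (Finset.univ ×ˢ Finset.range (m + 1)).powerset.finite_toSet.subset fun S hS => ?_
  simp only [Finset.coe_powerset, Set.mem_preimage, Set.mem_powerset_iff, Finset.coe_subset]
  intro s hs
  simpa [Nat.lt_succ_iff] using (hS.2.2.1 s hs).2

theorem image_fst_erase {S : Finset (Fin n × ℕ)} (hS : Set.InjOn Prod.fst (S : Set (Fin n × ℕ)))
    {v : Fin n × ℕ} (hv : v ∈ S) : (S.erase v).image Prod.fst = (S.image Prod.fst).erase v.1 := by
  ext i
  simp only [Finset.mem_image, Finset.mem_erase]
  constructor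
  · rintro ⟨s, ⟨hsv, hs⟩, rfl⟩
    exact ⟨fun h => hsv (hS hs hv h), s, hs, rfl⟩
  · rintro ⟨hi, s, hs, rfl⟩
    exact ⟨s, ⟨fun h => hi (h ▸ rfl), hs⟩, rfl⟩

theorem insert_erase_mem_generatorSets {S : Finset (Fin n × ℕ)} (hS : S ∈ generatorSets Δ r m)
    {v t : Fin n × ℕ} (hv : v ∈ S) (ht : 1 ≤ t.2) (htv : t.2 ≤ v.2)
    (hfst : t.1 ∉ (S.erase v).image Prod.fst)
    (hfacet : insert t.1 ((S.erase v).image Prod.fst) ∈ facets (complementComplex Δ)) :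
    insert t (S.erase v) ∈ generatorSets Δ r m := by
  obtain ⟨hinj, -, hbounds, hsum⟩ := hS
  have htS : t ∉ S.erase v := fun h => hfst (Finset.mem_image_of_mem _ h)
  refine ⟨?_, by rwa [Finset.image_insert], ?_, ?_⟩
  · rw [Finset.coe_insert, Set.injOn_insert (by exact_mod_cast htS)]
    refine ⟨hinj.mono (Finset.coe_subset.2 (Finset.erase_subset v S)), ?_⟩
    rwa [← Finset.coe_image, Finset.mem_coe]
  · intro s hs
    rcases Finset.mem_insert.1 hs with rfl | hs
    · exact ⟨ht, htv.trans (hbounds v hv).2⟩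
    · exact hbounds s (Finset.mem_of_mem_erase hs)
  · rw [Finset.sum_insert htS]
    have hsplit := Finset.add_sum_erase S Prod.snd hv
    omega

end GeneratorSets

section Exchange

variable {n : ℕ} {Δ : Set (Finset (Fin n))} {r m : ℕ} {S S' : Finset (Fin n × ℕ)}

theorem IsMatroidComplex.exists_swap_mem_facets (hM : IsMatroidComplex Δ)
    (hS : S ∈ generatorSets Δ r m) (hS' : S' ∈ generatorSets Δ r m) {v : Fin n × ℕ}
    (hv : v ∈ S) (hv' : v ∉ S') :
    ∃ t ∈ S', t ∉ S ∧ t.1 ∉ (S.erase v).image Prod.fst ∧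
      insert t.1 ((S.erase v).image Prod.fst) ∈ facets (complementComplex Δ) := by
  rw [image_fst_erase hS.1 hv]
  by_cases hq : v.1 ∈ S'.image Prod.fst
  · obtain ⟨t, ht, hfst⟩ := Finset.mem_image.1 hq
    refine ⟨t, ht, fun h => hv' (hS.1 h hv hfst ▸ ht), by simp [hfst], ?_⟩
    rw [hfst, Finset.insert_erase (Finset.mem_image_of_mem _ hv)]
    exact hS.2.1
  · obtain ⟨p, hp, hfacet⟩ := hM.exists_insert_erase_mem_facets_complementComplex hS.2.1 hS'.2.1
      (Finset.mem_sdiff.2 ⟨Finset.mem_image_of_mem _ hv, hq⟩)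
    obtain ⟨hpS', hpS⟩ := Finset.mem_sdiff.1 hp
    obtain ⟨t, ht, rfl⟩ := Finset.mem_image.1 hpS'
    exact ⟨t, ht, fun h => hpS (Finset.mem_image_of_mem _ h),
      fun h => hpS (Finset.mem_of_mem_erase h), hfacet⟩

theorem IsMatroidComplex.exists_exchange_generatorSets (hM : IsMatroidComplex Δ)
    (hS : S ∈ generatorSets Δ r m) (hS' : S' ∈ generatorSets Δ r m)
    (hlt : colexRank S' < colexRank S) :
    ∃ t ∈ S', t ∉ S ∧
      ∃ S'' ∈ generatorSets Δ r m, colexRank S'' < colexRank S ∧ S'' ⊆ insert t S := by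
  obtain ⟨v, hv, hv', hmax⟩ := colexRank_lt_colexRank_iff.1 hlt
  obtain ⟨t, ht, htS, hfst, hfacet⟩ := hM.exists_swap_mem_facets hS hS' hv hv'
  have htv := hmax t ht htS
  exact ⟨t, ht, htS, insert t (S.erase v),
    insert_erase_mem_generatorSets hS hv (hS'.2.2.1 t ht).1 (snd_le_of_levelKey_lt htv) hfst
      hfacet,
    colexRank_insert_erase_lt hv htv, Finset.insert_subset_insert _ (Finset.erase_subset _ _)⟩

theorem IsMatroidComplex.hasLinearQuotients_span_generatorSets (k : Type*) [Field k]
    (hM : IsMatroidComplex Δ) :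
    HasLinearQuotients k (Ideal.span
      ((fun S => monomial (squarefreeExponent S) (1 : k)) '' generatorSets Δ r m)) := by
  rw [← generatorSets_finite.coe_toFinset]
  refine hasLinearQuotients_of_exchange _ _ _ colexRank_injective fun S hS S' hS' hlt => ?_
  rw [Set.Finite.mem_toFinset] at hS hS'
  obtain ⟨t, ht, htS, S'', hS'', hlt'', hsub⟩ := hM.exists_exchange_generatorSets hS hS' hlt
  refine ⟨t, by simp [squarefreeExponent_apply, ht, htS], S'', by simpa using hS'', hlt'', ?_⟩
  rw [← squarefreeExponent_insert htS]
  exact squarefreeExponent_mono hsub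

end Exchange

section Enumeration

variable {n : ℕ} {Δ : Set (Finset (Fin n))} {r m : ℕ}

theorem image_mem_generatorSets_iff {g : Fin r → Fin n × ℕ}
    (hg : Function.Injective (Prod.fst ∘ g)) :
    Finset.univ.image g ∈ generatorSets Δ r m ↔
      Finset.univ.image (Prod.fst ∘ g) ∈ facets (complementComplex Δ) ∧
        (∀ j, 1 ≤ (g j).2 ∧ (g j).2 ≤ m) ∧ ∑ j, (g j).2 ≤ m + r - 1 := by
  have hinj : Set.InjOn Prod.fst (Finset.univ.image g : Set (Fin n × ℕ)) := by
    rintro _ hs _ ht h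
    obtain ⟨i, -, rfl⟩ := Finset.mem_image.1 hs
    obtain ⟨j, -, rfl⟩ := Finset.mem_image.1 ht
    rw [hg h]
  rw [generatorSets, Set.mem_ofPred_eq, Finset.image_image, Finset.forall_mem_image,
    Finset.sum_image fun _ _ _ _ h => hg.of_comp h]
  simp only [Finset.mem_univ, true_implies, hinj, true_and]

theorem exists_univ_image_eq_of_mem_generatorSets
    (hr : ∀ F ∈ facets (complementComplex Δ), F.card = r) {S : Finset (Fin n × ℕ)}
    (hS : S ∈ generatorSets Δ r m) :
    ∃ g : Fin r → Fin n × ℕ, Function.Injective (Prod.fst ∘ g) ∧ Finset.univ.image g = S := by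
  have hcard : S.card = r := by
    rw [← Finset.card_image_of_injOn hS.1, hr _ hS.2.1]
  let e := S.equivFinOfCardEq hcard
  refine ⟨fun j => e.symm j, fun i j h => e.symm.injective (Subtype.ext (hS.1 ?_ ?_ h)), ?_⟩
  · exact (e.symm i).2
  · exact (e.symm j).2
  · ext s
    simp only [Finset.mem_image, Finset.mem_univ, true_and]
    exact ⟨by rintro ⟨j, rfl⟩; exact (e.symm j).2, fun hs => ⟨e ⟨s, hs⟩, by simp⟩⟩

theorem setOf_prod_X_eq_image_generatorSets (k : Type*) [CommSemiring k]
    (hr : ∀ F ∈ facets (complementComplex Δ), F.card = r) :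
    {u : MvPolynomial (Fin n × ℕ) k | ∃ (f : Fin r → Fin n) (a : Fin r → ℕ),
      Function.Injective f ∧ Finset.univ.image f ∈ facets (complementComplex Δ) ∧
        (∀ j, 1 ≤ a j ∧ a j ≤ m) ∧ (∑ j, a j) ≤ m + r - 1 ∧ u = ∏ j, X (f j, a j)} =
      (fun S => monomial (squarefreeExponent S) (1 : k)) '' generatorSets Δ r m := by
  ext u
  constructor
  · rintro ⟨f, a, hf, hfacet, hbounds, hsum, rfl⟩
    have hg : Function.Injective (Prod.fst ∘ fun j => (f j, a j)) := hf
    exact ⟨_, (image_mem_generatorSets_iff hg).2 ⟨hfacet, hbounds, hsum⟩,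
      monomial_squarefreeExponent_image hg.of_comp⟩
  · rintro ⟨S, hS, rfl⟩
    obtain ⟨g, hg, rfl⟩ := exists_univ_image_eq_of_mem_generatorSets hr hS
    obtain ⟨hfacet, hbounds, hsum⟩ := (image_mem_generatorSets_iff hg).1 hS
    exact ⟨_, _, hg, hfacet, hbounds, hsum, monomial_squarefreeExponent_image hg.of_comp⟩

end Enumeration

theorem statement12_general (k : Type*) [Field k] {n : ℕ} (Δ : Set (Finset (Fin n)))
    (hM : IsMatroidComplex Δ) (r m : ℕ)
    (hr : ∀ F ∈ facets (complementComplex Δ), F.card = r) :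
    HasLinearQuotients k (Ideal.span {u : MvPolynomial (Fin n × ℕ) k |
      ∃ (f : Fin r → Fin n) (a : Fin r → ℕ), Function.Injective f ∧
        Finset.univ.image f ∈ facets (complementComplex Δ) ∧
        (∀ j, 1 ≤ a j ∧ a j ≤ m) ∧ (∑ j, a j) ≤ m + r - 1 ∧
        u = ∏ j, X (f j, a j)}) := by
  rw [setOf_prod_X_eq_image_generatorSets k hr]
  exact hM.hasLinearQuotients_span_generatorSets k

/-- For a matroid `Δ` with all facets of `Δᶜ` of size `r`, the Alexander
dual of the polarized `m`-th symbolic power (the ideal generated by the monomials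
`x_{i₁,a₁}⋯x_{i_r,a_r}` with `{i₁,…,i_r} ∈ F(Δᶜ)`, `1 ≤ a_j ≤ m`,
`∑ a_j ≤ m + r − 1`) has linear quotients. -/
theorem statement12 (k : Type*) [Field k] {n : ℕ} (Δ : Set (Finset (Fin n)))
    (hM : IsMatroidComplex Δ) (r m : ℕ) (hm : 0 < m)
    (hr : ∀ F ∈ facets (complementComplex Δ), F.card = r) :
    HasLinearQuotients k (Ideal.span {u : MvPolynomial (Fin n × ℕ) k |
      ∃ (f : Fin r → Fin n) (a : Fin r → ℕ), Function.Injective f ∧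
        Finset.univ.image f ∈ facets (complementComplex Δ) ∧
        (∀ j, 1 ≤ a j ∧ a j ≤ m) ∧ (∑ j, a j) ≤ m + r - 1 ∧
        u = ∏ j, X (f j, a j)}) :=
  statement12_general k Δ hM r m hr
end
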